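/- Let $R>0$, $P>0$, $\alpha>2$ and $\delta=2/\alpha$. Let $D$ be a random variable with density $f(r)=\frac{8r}{3R^2}$ on $[R/2,\,R]$ and let $H$ be an Exp(1) random variable independent of $D$. Then for every $s>0$ with $sP\,2^{\alpha}R^{-\alpha}<1$, $\mathbb{E}\bigl[\exp(-sP\,D^{-\alpha}H)\bigr] \;=\; \frac{4}{3}\, S_\delta\bigl(-sP R^{-\alpha}\bigr) \;-\; \frac{1}{3}\, S_\delta\bigl(-sP\,2^{\alpha} R^{-\alpha}\bigr)$, where $S_\delta(z)=\sum_{n=0}^{\infty} \frac{\delta}{\delta-n} z^n$. -/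

import Mathlib

/-!
Conditioning on the distance `D = r`, the Laplace transform of the Exp(1) gain gives
`E[exp(-sP r^(-α) H)] = 1 / (1 + sP r^(-α))`. Since `sP r^(-α) ≤ sP 2^α R^(-α) < 1` on
`[R/2, R]`, this is a geometric series with terms dominated by a summable geometric bound, so it
may be integrated termwise against the density `8r/(3R²)`. The `n`-th term is an integral of a power
`r^(1-αn)`, which evaluates to
`(4/3) δ/(δ-n) (-sP R^(-α))^n - (1/3) δ/(δ-n) (-sP (R/2)^(-α))^n`.
-/

open MeasureTheory ProbabilityTheory Set

/-- The series `S_δ(z) = ∑ₙ δ/(δ-n) zⁿ`, i.e. the Gauss hypergeometric function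
`₂F₁(1, -δ; 1-δ; z)`. -/
noncomputable def Sser (δ z : ℝ) : ℝ := ∑' n : ℕ, δ / (δ - n) * z ^ n

theorem integral_withDensity_ofReal_indicator {α : Type*} [MeasurableSpace α] {μ : Measure α}
    {S : Set α} (hS : MeasurableSet S) {f : α → ℝ} (hf : Measurable f)
    (hf_nonneg : ∀ x ∈ S, 0 ≤ f x) (g : α → ℝ) :
    ∫ x, g x ∂μ.withDensity (fun x => ENNReal.ofReal (S.indicator f x))
      = ∫ x in S, f x * g x ∂μ := by
  rw [integral_withDensity_eq_integral_toReal_smul (hf.indicator hS).ennreal_ofReal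
    (ae_of_all _ fun _ => ENNReal.ofReal_lt_top), ← integral_indicator hS]
  congr 1 with x
  by_cases hx : x ∈ S
  · simp [hx, hf_nonneg x hx]
  · simp [hx]

theorem ae_mem_of_withDensity_ofReal_indicator {α : Type*} [MeasurableSpace α]
    {μ : Measure α} {S : Set α} (hS : MeasurableSet S) {f : α → ℝ} (hf : Measurable f) :
    ∀ᵐ x ∂μ.withDensity (fun x => ENNReal.ofReal (S.indicator f x)), x ∈ S := by
  rw [ae_withDensity_iff (hf.indicator hS).ennreal_ofReal]
  refine ae_of_all _ fun x hx => ?_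
  by_contra hxS
  simp [hxS] at hx

theorem expMeasure_eq_withDensity (r : ℝ) :
    expMeasure r = volume.withDensity
      (fun x => ENNReal.ofReal ((Ici 0).indicator (fun x => r * Real.exp (-(r * x))) x)) := by
  rw [expMeasure, gammaMeasure]
  congr 1 with x
  change exponentialPDF r x = _
  rw [exponentialPDF_eq]
  simp [Set.indicator_apply]

theorem integral_exp_neg_mul_expMeasure {r b : ℝ} (hr : 0 < r) (hb : -r < b) :
    ∫ x, Real.exp (-(b * x)) ∂expMeasure r = r / (r + b) := by
  rw [expMeasure_eq_withDensity, integral_withDensity_ofReal_indicator measurableSet_Ici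
    (by fun_prop) (fun x _ => by positivity), integral_Ici_eq_integral_Ioi]
  have hexp : ∀ x : ℝ, r * Real.exp (-(r * x)) * Real.exp (-(b * x))
      = r * Real.exp (-(r + b) * x) := fun x => by
    rw [mul_assoc, ← Real.exp_add]; ring_nf
  simp_rw [hexp]
  rw [integral_const_mul, integral_exp_mul_Ioi (by linarith) 0]
  have : r + b ≠ 0 := by linarith
  field_simp
  simp

theorem ProbabilityTheory.IndepFun.integral_comp_eq_integral_integral {Ω β γ E : Type*}
    [MeasurableSpace Ω] [MeasurableSpace β] [MeasurableSpace γ] [NormedAddCommGroup E]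
    [NormedSpace ℝ E]
    {μ : Measure Ω} [IsFiniteMeasure μ] {X : Ω → β} {Y : Ω → γ}
    (hX : AEMeasurable X μ) (hY : AEMeasurable Y μ) (hXY : IndepFun X Y μ)
    {F : β × γ → E} (hF : Integrable F ((μ.map X).prod (μ.map Y))) :
    ∫ ω, F (X ω, Y ω) ∂μ = ∫ x, ∫ y, F (x, y) ∂(μ.map Y) ∂(μ.map X) := by
  have hmap := (indepFun_iff_map_prod_eq_prod_map_map hX hY).1 hXY
  rw [← integral_prod _ hF, ← hmap, integral_map (hX.prodMk hY)]
  exact hmap ▸ hF.aestronglyMeasurable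

theorem hasSum_integral_mul_pow {α 𝕜 : Type*} [MeasurableSpace α] [RCLike 𝕜] {μ : Measure α}
    {f g : α → 𝕜} (hf : Integrable f μ) (hg : AEStronglyMeasurable g μ) {q : ℝ} (hq0 : 0 ≤ q)
    (hq : q < 1) (hgq : ∀ᵐ x ∂μ, ‖g x‖ ≤ q) :
    HasSum (fun n : ℕ => ∫ x, f x * g x ^ n ∂μ) (∫ x, f x * (1 - g x)⁻¹ ∂μ) := by
  refine hasSum_integral_of_dominated_convergence (fun n x => ‖f x‖ * q ^ n)
    (fun n => hf.aestronglyMeasurable.mul (hg.pow n)) (fun n => ?_) ?_ ?_ ?_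
  · filter_upwards [hgq] with x hx
    rw [norm_mul, norm_pow]
    gcongr
  · exact ae_of_all _ fun x => (summable_geometric_of_lt_one hq0 hq).mul_left _
  · simp_rw [tsum_mul_left, tsum_geometric_of_lt_one hq0 hq]
    exact hf.norm.mul_const _
  · filter_upwards [hgq] with x hx
    exact (hasSum_geometric_of_norm_lt_one (hx.trans_lt hq)).mul_left (f x)

theorem setIntegral_Icc_half_mul_rpow {R β : ℝ} (hR : 0 < R) (hβ : β ≠ -2) :
    ∫ r in Icc (R / 2) R, 8 * r / (3 * R ^ 2) * r ^ β
      = 4 / 3 * (2 / (β + 2)) * R ^ β - 1 / 3 * (2 / (β + 2)) * (R / 2) ^ β := by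
  have hR2 : 0 < R / 2 := by positivity
  have hβ2 : β + 2 ≠ 0 := fun h => hβ (by linarith)
  have hintegrand : EqOn (fun r => 8 * r / (3 * R ^ 2) * r ^ β)
      (fun r => 8 / (3 * R ^ 2) * r ^ (β + 1)) (uIcc (R / 2) R) := by
    intro r hr
    rw [uIcc_of_le (by linarith)] at hr
    simp only
    rw [Real.rpow_add_one (hR2.trans_le hr.1).ne']
    ring
  rw [integral_Icc_eq_integral_Ioc, ← intervalIntegral.integral_of_le (by linarith),
    intervalIntegral.integral_congr hintegrand, intervalIntegral.integral_const_mul,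
    integral_rpow (Or.inr ⟨fun h => hβ2 (by linarith), by
      rw [uIcc_of_le (by linarith)]; exact fun h => hR2.not_ge h.1⟩),
    show β + 1 + 1 = β + 2 by ring, Real.rpow_add hR, Real.rpow_add hR2, Real.rpow_two,
    Real.rpow_two]
  field_simp
  ring

theorem neg_mul_rpow_neg_pow {x : ℝ} (hx : 0 ≤ x) (a α : ℝ) (n : ℕ) :
    (-(a * x ^ (-α))) ^ n = (-a) ^ n * x ^ (-(α * n)) := by
  rw [← neg_mul, mul_pow, ← Real.rpow_natCast (x ^ (-α)), ← Real.rpow_mul hx, neg_mul]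

theorem setIntegral_Icc_half_mul_neg_mul_rpow_neg_pow {R α : ℝ} (hR : 0 < R) (hα : α ≠ 0)
    (a : ℝ) {n : ℕ} (hn : α * n ≠ 2) :
    ∫ r in Icc (R / 2) R, 8 * r / (3 * R ^ 2) * (-(a * r ^ (-α))) ^ n
      = 4 / 3 * ((2 / α) / (2 / α - n) * (-(a * R ^ (-α))) ^ n)
        - 1 / 3 * ((2 / α) / (2 / α - n) * (-(a * (R / 2) ^ (-α))) ^ n) := by
  have hR2 : 0 < R / 2 := by positivity
  have hintegrand : EqOn (fun r => 8 * r / (3 * R ^ 2) * (-(a * r ^ (-α))) ^ n)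
      (fun r => (-a) ^ n * (8 * r / (3 * R ^ 2) * r ^ (-(α * n)))) (Icc (R / 2) R) := by
    intro r hr
    simp only
    rw [neg_mul_rpow_neg_pow (hR2.le.trans hr.1)]
    ring
  have hcoef : (2 / α) / (2 / α - n) = 2 / (-(α * n) + 2) := by
    have h : 2 - α * n ≠ 0 := sub_ne_zero.2 hn.symm
    have h' : -(α * n) + 2 ≠ 0 := by rwa [neg_add_eq_sub]
    field_simp
    ring
  rw [setIntegral_congr_fun measurableSet_Icc hintegrand, integral_const_mul,
    setIntegral_Icc_half_mul_rpow hR (by contrapose! hn; linarith), hcoef,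
    neg_mul_rpow_neg_pow hR.le, neg_mul_rpow_neg_pow hR2.le]
  ring

/-- Law of `‖X‖` for `X` uniform on the planar annulus `R/2 ≤ ‖X‖ ≤ R`: its density is the
circumference `2πr` divided by the area `π(R² - R²/4)`. -/
noncomputable def annulusRadiusMeasure (R : ℝ) : Measure ℝ :=
  volume.withDensity fun r =>
    ENNReal.ofReal ((Icc (R / 2) R).indicator (fun r => 8 * r / (3 * R ^ 2)) r)

theorem integral_annulusRadiusMeasure (R : ℝ) (g : ℝ → ℝ) :
    ∫ r, g r ∂annulusRadiusMeasure R = ∫ r in Icc (R / 2) R, 8 * r / (3 * R ^ 2) * g r :=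
  integral_withDensity_ofReal_indicator measurableSet_Icc (by fun_prop)
    (fun r hr => by have : 0 ≤ r := (by linarith [hr.1, hr.2]); positivity) g

theorem ae_mem_Icc_annulusRadiusMeasure (R : ℝ) :
    ∀ᵐ r ∂annulusRadiusMeasure R, r ∈ Icc (R / 2) R :=
  ae_mem_of_withDensity_ofReal_indicator measurableSet_Icc (by fun_prop)

instance (R : ℝ) : IsFiniteMeasure (annulusRadiusMeasure R) :=
  isFiniteMeasure_withDensity_ofReal
    ((integrable_indicator_iff measurableSet_Icc).2 (by fun_prop : Continuous fun r : ℝ =>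
      8 * r / (3 * R ^ 2)).integrableOn_Icc).hasFiniteIntegral

theorem isProbabilityMeasure_annulusRadiusMeasure {R : ℝ} (hR : 0 < R) :
    IsProbabilityMeasure (annulusRadiusMeasure R) := by
  have h := integral_annulusRadiusMeasure R fun _ => 1
  have h0 := setIntegral_Icc_half_mul_rpow hR (β := 0) (by norm_num)
  simp only [Real.rpow_zero, mul_one] at h0 h
  rw [h0, integral_const, smul_eq_mul, mul_one] at h
  norm_num at h
  constructor
  rw [← ENNReal.ofReal_toReal (measure_ne_top _ _)]
  simp [← measureReal_def, h]

theorem ae_nonneg_expMeasure (r : ℝ) : ∀ᵐ x ∂expMeasure r, 0 ≤ x := by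
  rw [expMeasure_eq_withDensity]
  exact ae_mem_of_withDensity_ofReal_indicator measurableSet_Ici (by fun_prop)

theorem integrable_exp_neg_mul_rpow_neg_mul {ν₁ ν₂ : Measure ℝ} [IsFiniteMeasure ν₁]
    [IsFiniteMeasure ν₂] (h₁ : ∀ᵐ x ∂ν₁, 0 ≤ x) (h₂ : ∀ᵐ y ∂ν₂, 0 ≤ y) {a : ℝ} (ha : 0 ≤ a)
    (α : ℝ) : Integrable (fun p : ℝ × ℝ => Real.exp (-(a * p.1 ^ (-α) * p.2))) (ν₁.prod ν₂) := by
  refine (integrable_const 1).mono' (by fun_prop) ?_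
  filter_upwards [Measure.quasiMeasurePreserving_fst.ae h₁,
    Measure.quasiMeasurePreserving_snd.ae h₂] with p hp₁ hp₂
  rw [Real.norm_of_nonneg (Real.exp_pos _).le, Real.exp_le_one_iff, neg_nonpos]
  have := Real.rpow_nonneg hp₁ (-α)
  positivity

theorem summable_Sser {δ z : ℝ} (hδ0 : 0 < δ) (hδ1 : δ < 1) (hz : |z| < 1) :
    Summable fun n : ℕ => δ / (δ - n) * z ^ n := by
  refine .of_norm_bounded
    ((summable_geometric_of_lt_one (abs_nonneg z) hz).mul_left (1 / (1 - δ))) fun n => ?_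
  rw [norm_mul, norm_pow, Real.norm_eq_abs, Real.norm_eq_abs]
  gcongr
  rcases Nat.eq_zero_or_pos n with rfl | hn
  · rw [Nat.cast_zero, sub_zero, div_self hδ0.ne', abs_one, le_div_iff₀ (by linarith)]
    linarith
  · have hn1 : (1 : ℝ) ≤ n := by exact_mod_cast hn
    rw [abs_div, abs_of_pos hδ0, abs_of_neg (by linarith : δ - (n : ℝ) < 0), neg_sub]
    exact div_le_div₀ zero_le_one (by linarith) (by linarith) (by linarith)

theorem integral_exp_neg_mul_rpow_neg_mul_of_indepFun {Ω : Type*} [MeasurableSpace Ω]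
    {μ : Measure Ω} [IsFiniteMeasure μ] {D H : Ω → ℝ} {R : ℝ} (hR : 0 < R)
    (hD : μ.map D = annulusRadiusMeasure R) (hH : μ.map H = expMeasure 1)
    (hindep : IndepFun D H μ) {a : ℝ} (ha : 0 ≤ a) (α : ℝ) :
    ∫ ω, Real.exp (-(a * D ω ^ (-α) * H ω)) ∂μ
      = ∫ r in Icc (R / 2) R, 8 * r / (3 * R ^ 2) * (1 + a * r ^ (-α))⁻¹ := by
  have := isProbabilityMeasure_annulusRadiusMeasure hR
  have := isProbabilityMeasure_expMeasure one_pos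
  have hDm : AEMeasurable D μ := .of_map_ne_zero (hD ▸ IsProbabilityMeasure.ne_zero _)
  have hHm : AEMeasurable H μ := .of_map_ne_zero (hH ▸ IsProbabilityMeasure.ne_zero _)
  have hF : Integrable (fun p : ℝ × ℝ => Real.exp (-(a * p.1 ^ (-α) * p.2)))
      ((μ.map D).prod (μ.map H)) := by
    rw [hD, hH]
    refine integrable_exp_neg_mul_rpow_neg_mul ?_ (ae_nonneg_expMeasure 1) ha α
    filter_upwards [ae_mem_Icc_annulusRadiusMeasure R] with r hr
    linarith [hr.1, hr.2]
  rw [hindep.integral_comp_eq_integral_integral hDm hHm hF, hD, hH, integral_annulusRadiusMeasure]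
  refine setIntegral_congr_fun measurableSet_Icc fun r hr => ?_
  have := Real.rpow_nonneg (by linarith [hr.1, hr.2] : 0 ≤ r) (-α)
  dsimp only
  rw [integral_exp_neg_mul_expMeasure one_pos (by linarith [mul_nonneg ha this]), one_div]

theorem hasSum_setIntegral_Icc_half_mul_inv_one_add {R α a : ℝ} (hR : 0 < R) (hα : 2 < α)
    (ha : 0 ≤ a) (hsmall : a * 2 ^ α * R ^ (-α) < 1) :
    HasSum (fun n : ℕ => 4 / 3 * ((2 / α) / (2 / α - n) * (-(a * R ^ (-α))) ^ n)
        - 1 / 3 * ((2 / α) / (2 / α - n) * (-(a * 2 ^ α * R ^ (-α))) ^ n))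
      (∫ r in Icc (R / 2) R, 8 * r / (3 * R ^ 2) * (1 + a * r ^ (-α))⁻¹) := by
  have hα0 : 0 < α := by linarith
  have hhalf : (R / 2) ^ (-α) = 2 ^ α * R ^ (-α) := by
    rw [Real.div_rpow hR.le zero_le_two, Real.rpow_neg zero_le_two, div_inv_eq_mul, mul_comm]
  have hnorm : ∀ᵐ r ∂volume.restrict (Icc (R / 2) R), ‖-(a * r ^ (-α))‖ ≤ a * 2 ^ α * R ^ (-α) := by
    refine ae_restrict_of_forall_mem measurableSet_Icc fun r hr => ?_
    have hr0 : 0 < r := by linarith [hr.1]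
    rw [norm_neg, Real.norm_of_nonneg (by positivity), mul_assoc _ (2 ^ α), ← hhalf]
    exact mul_le_mul_of_nonneg_left
      (Real.rpow_le_rpow_of_nonpos (by positivity) hr.1 (neg_nonpos.2 hα0.le)) ha
  have hgeom := hasSum_integral_mul_pow (μ := volume.restrict (Icc (R / 2) R))
    (f := fun r => 8 * r / (3 * R ^ 2)) (g := fun r => -(a * r ^ (-α)))
    (by fun_prop : Continuous fun r : ℝ => 8 * r / (3 * R ^ 2)).integrableOn_Icc
    (by fun_prop) (by positivity) hsmall hnorm
  simp_rw [sub_neg_eq_add] at hgeom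
  have hterm (n : ℕ) : ∫ r in Icc (R / 2) R, 8 * r / (3 * R ^ 2) * (-(a * r ^ (-α))) ^ n
      = 4 / 3 * ((2 / α) / (2 / α - n) * (-(a * R ^ (-α))) ^ n)
        - 1 / 3 * ((2 / α) / (2 / α - n) * (-(a * 2 ^ α * R ^ (-α))) ^ n) := by
    have hn : α * n ≠ 2 := by
      rcases Nat.eq_zero_or_pos n with rfl | hn
      · norm_num
      · have : (1 : ℝ) ≤ n := by exact_mod_cast hn
        nlinarith
    rw [setIntegral_Icc_half_mul_neg_mul_rpow_neg_pow hR hα0.ne' _ hn, hhalf, mul_assoc a]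
  simp_rw [hterm] at hgeom
  exact hgeom

/-- Corollary 1: closed-form Laplace transform of the terrestrial interference in the
two-device case: the interferer's distance `D` has density `8r/(3R²)` on `[R/2, R]`,
its Rayleigh power gain `H` is Exp(1) independent of `D`, and for `sP 2^α R^(-α) < 1`,
`E[exp(-sP D^(-α) H)] = (4/3) S_δ(-sP R^(-α)) - (1/3) S_δ(-sP 2^α R^(-α))`. -/
theorem stmt_8 {Ω : Type*} [MeasurableSpace Ω] (μ : Measure Ω) [IsProbabilityMeasure μ]
    (R P α δ : ℝ) (hR : 0 < R) (hP : 0 < P) (hα : 2 < α) (hδ : δ = 2 / α)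
    (D H : Ω → ℝ)
    (hD : Measure.map D μ = volume.withDensity (fun r => ENNReal.ofReal
      (Set.indicator (Set.Icc (R / 2) R) (fun r => 8 * r / (3 * R ^ 2)) r)))
    (hH : Measure.map H μ = volume.withDensity (fun x => ENNReal.ofReal
      (Set.indicator (Set.Ici (0 : ℝ)) (fun x => Real.exp (-x)) x)))
    (hindep : IndepFun D H μ)
    (s : ℝ) (hs : 0 < s) (hsmall : s * P * 2 ^ α * R ^ (-α) < 1) :
    ∫ ω, Real.exp (-(s * P * (D ω) ^ (-α) * H ω)) ∂μ
      = 4 / 3 * Sser δ (-(s * P * R ^ (-α))) - 1 / 3 * Sser δ (-(s * P * 2 ^ α * R ^ (-α))) := by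
  subst hδ
  have hα0 : 0 < α := by linarith
  have ha : 0 < s * P := mul_pos hs hP
  have hδ0 : 0 < 2 / α := by positivity
  have hδ1 : 2 / α < 1 := (div_lt_one hα0).2 hα
  have hz : s * P * R ^ (-α) < 1 := by
    refine lt_of_le_of_lt ?_ hsmall
    rw [mul_right_comm (s * P)]
    exact le_mul_of_one_le_right (by positivity) (Real.one_le_rpow one_le_two hα0.le)
  replace hH : μ.map H = expMeasure 1 := by simpa [expMeasure_eq_withDensity] using hH
  rw [integral_exp_neg_mul_rpow_neg_mul_of_indepFun hR hD hH hindep ha.le α]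
  refine (hasSum_setIntegral_Icc_half_mul_inv_one_add hR hα ha.le hsmall).unique
    (((summable_Sser hδ0 hδ1 ?_).hasSum.mul_left _).sub
      ((summable_Sser hδ0 hδ1 ?_).hasSum.mul_left _))
  · rwa [abs_neg, abs_of_pos (by positivity)]
  · rwa [abs_neg, abs_of_pos (by positivity)]
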